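/- Let X be a topological space. Then X^ω is pseudocompact if and only if for every countable family {(U_{n,k})_k : n ∈ ℕ} of sequences of pairwise disjoint nonempty open subsets of X, the intersection ⋂_n u((U_{n,k})_k) is nonempty, where u((U_{n,k})_k) is the set of free ultrafilters p such that the sequence of sets (U_{n,k})_k p-accumulates at some point of X. -/

import Mathlib

/-!
(⇒) The boxes `W k = ∏_{n ≤ k} U n k` are nonempty open in `X^ω`. In a pseudocompact completely
regular space no sequence of nonempty open sets is locally finite (else `∑ k • (bump in W k)` would
be continuous and unbounded), and an ultrafilter refining the traces of the neighbourhoods of a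
point of non-local-finiteness projects to a common accumulation ultrafilter on every coordinate.

(⇐) An unbounded continuous `f` yields the locally finite sequence `{|f| > k}`, which shrinks to
boxes `∏_n A n k`, so it suffices that all rows `(A n k)_k` accumulate along one free ultrafilter.
On a suitable infinite set of indices each row either converges to a point or shrinks to a cellular
sequence; a diagonal argument makes one subsequence good for all rows, and the hypothesis, applied
to the cellular rows, provides the ultrafilter.
-/

open Set Filter Topology Function

/-- A free ultrafilter on ℕ: one containing no singleton. -/
def FreeUF (p : Ultrafilter ℕ) : Prop := ∀ n : ℕ, ({n} : Set ℕ) ∉ p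

/-- `l` is the `p`-limit of the sequence `x`. -/
def PLim {X : Type*} [TopologicalSpace X] (p : Ultrafilter ℕ) (x : ℕ → X) (l : X) : Prop :=
  Filter.Tendsto x (p : Filter ℕ) (nhds l)

/-- A βω-space: the closure of any countably infinite discrete subset with compact closure
is homeomorphic to βℕ. -/
def BetaOmegaSpace (X : Type*) [TopologicalSpace X] : Prop :=
  ∀ M : Set X, M.Countable → M.Infinite → DiscreteTopology M → IsCompact (closure M) →
    Nonempty (closure M ≃ₜ StoneCech ℕ)

/-- Keisler–Rudin (Rudin–Keisler) order on ultrafilters on ℕ. -/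
def RKle (p q : Ultrafilter ℕ) : Prop := ∃ f : ℕ → ℕ, Ultrafilter.map f q = p

/-- A homogeneous space. -/
def Homogeneous (X : Type*) [TopologicalSpace X] : Prop :=
  ∀ x y : X, ∃ h : X ≃ₜ X, h x = y

/-- Pseudocompactness: every continuous real-valued function is bounded. -/
def Pseudocompact (Y : Type*) [TopologicalSpace Y] : Prop :=
  ∀ f : Y → ℝ, Continuous f → ∃ C : ℝ, ∀ y, |f y| ≤ C

section

variable {p : Ultrafilter ℕ}

theorem freeUF_iff_le_cofinite : FreeUF p ↔ (p : Filter ℕ) ≤ cofinite := by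
  simp only [le_cofinite_iff_compl_singleton_mem, Ultrafilter.mem_coe,
    Ultrafilter.compl_mem_iff_notMem, FreeUF]

theorem FreeUF.le_cofinite (hp : FreeUF p) : (p : Filter ℕ) ≤ cofinite :=
  freeUF_iff_le_cofinite.1 hp

theorem FreeUF.infinite_of_mem (hp : FreeUF p) {s : Set ℕ} (hs : s ∈ p) : s.Infinite :=
  frequently_cofinite_iff_infinite.1 ((Ultrafilter.frequently_iff_eventually.2 hs).filter_mono
    hp.le_cofinite)

theorem FreeUF.map (hp : FreeUF p) {u : ℕ → ℕ} (hu : Injective u) : FreeUF (p.map u) :=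
  freeUF_iff_le_cofinite.2 ((map_mono hp.le_cofinite).trans hu.tendsto_cofinite)

theorem freeUF_hyperfilter : FreeUF (hyperfilter ℕ) :=
  freeUF_iff_le_cofinite.2 hyperfilter_le_cofinite

end

section Accumulation

variable {X Y : Type*} [TopologicalSpace X] [TopologicalSpace Y] {p : Ultrafilter ℕ}

/-- The paper's `p ∈ u((M k)_k)`. -/
def PAccumulates (p : Ultrafilter ℕ) (M : ℕ → Set X) : Prop :=
  ∃ x : X, ∀ V ∈ 𝓝 x, {k | (V ∩ M k).Nonempty} ∈ p

theorem PAccumulates.of_mapsTo {M : ℕ → Set Y} {N : ℕ → Set X} {f : Y → X} (hf : Continuous f)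
    (hM : PAccumulates p M) (hMN : ∀ᶠ k in (p : Filter ℕ), MapsTo f (M k) (N k)) :
    PAccumulates p N := by
  obtain ⟨y, hy⟩ := hM
  refine ⟨f y, fun V hV => ?_⟩
  filter_upwards [hy _ (hf.continuousAt hV), hMN] with k ⟨z, hzV, hzM⟩ hk
  exact ⟨f z, hzV, hk hzM⟩

theorem PAccumulates.mono {M N : ℕ → Set X} (hM : PAccumulates p M)
    (hMN : ∀ᶠ k in (p : Filter ℕ), M k ⊆ N k) : PAccumulates p N :=
  hM.of_mapsTo continuous_id hMN

theorem PAccumulates.not_locallyFinite (hp : FreeUF p) {M : ℕ → Set X} (hM : PAccumulates p M) :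
    ¬LocallyFinite M := by
  obtain ⟨x, hx⟩ := hM
  intro hlf
  obtain ⟨V, hV, hfin⟩ := hlf x
  exact hp.infinite_of_mem (hx V hV) (hfin.subset fun k ⟨z, hzV, hzM⟩ => ⟨z, hzM, hzV⟩)

theorem exists_freeUF_pAccumulates_of_not_locallyFinite {M : ℕ → Set X} (hM : ¬LocallyFinite M) :
    ∃ p : Ultrafilter ℕ, FreeUF p ∧ PAccumulates p M := by
  simp only [LocallyFinite, not_forall, not_exists, not_and] at hM
  obtain ⟨x, hx⟩ := hM
  have hmono : Monotone fun V : Set X => {k | (V ∩ M k).Nonempty} :=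
    fun V W hVW k hk => hk.mono (inter_subset_inter_left _ hVW)
  let F := (𝓝 x).lift' fun V => {k | (V ∩ M k).Nonempty}
  have : NeBot (F ⊓ cofinite) := ((𝓝 x).basis_sets.lift' hmono).inf_neBot_iff.2 fun V hV s hs => by
    have hinf : {k | (V ∩ M k).Nonempty}.Infinite := fun h => hx V hV (by simpa only [inter_comm])
    show ({k | (V ∩ M k).Nonempty} ∩ s).Nonempty
    rw [← Set.sdiff_compl]
    exact (hinf.sdiff (mem_cofinite.1 hs)).nonempty
  refine ⟨.of (F ⊓ cofinite), freeUF_iff_le_cofinite.2 ((Ultrafilter.of_le _).trans inf_le_right),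
    x, fun V hV => Ultrafilter.of_le _ (mem_inf_of_left (mem_lift' hV))⟩

end Accumulation

section Pseudocompact

variable {Y : Type*} [TopologicalSpace Y]

theorem Pseudocompact.not_locallyFinite [CompletelyRegularSpace Y] (hY : Pseudocompact Y)
    {O : ℕ → Set Y} (hO : ∀ k, IsOpen (O k)) (hne : ∀ k, (O k).Nonempty) : ¬LocallyFinite O := by
  intro hlf
  choose y hy using hne
  choose g hg hgy hgO using fun k =>
    CompletelyRegularSpace.completely_regular_isOpen (y k) (O k) (hO k) (hy k)
  let φ : ℕ → Y → ℝ := fun k z => k * (1 - g k z)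
  have hsupp : ∀ k, support (φ k) ⊆ O k := fun k z hz =>
    by_contra fun hzO => hz (by simp [φ, hgO k hzO])
  have hφ : ∀ k z, 0 ≤ φ k z := fun k z => mul_nonneg k.cast_nonneg (sub_nonneg.2 (g k z).2.2)
  have hcont : Continuous fun z => ∑ᶠ k, φ k z :=
    continuous_finsum (fun k => continuous_const.mul (continuous_const.sub
      (continuous_subtype_val.comp (hg k)))) (hlf.subset hsupp)
  obtain ⟨C, hC⟩ := hY _ hcont
  obtain ⟨k, hk⟩ := exists_nat_gt C
  have hfin : (support fun j => φ j (y k)).Finite :=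
    (hlf.point_finite (y k)).subset fun j hj => hsupp j hj
  have : (k : ℝ) ≤ ∑ᶠ j, φ j (y k) := by
    simpa [φ, hgy] using single_le_finsum k hfin fun j => hφ j (y k)
  linarith [le_abs_self (∑ᶠ j, φ j (y k)), hC (y k)]

theorem locallyFinite_lt_abs {f : Y → ℝ} (hf : Continuous f) :
    LocallyFinite fun k : ℕ => {y | (k : ℝ) < |f y|} := by
  intro x
  refine ⟨f ⁻¹' Metric.ball (f x) 1, hf.continuousAt (Metric.ball_mem_nhds _ one_pos),
    (finite_Iio ⌈|f x| + 1⌉₊).subset fun k ⟨y, hky, hy⟩ => Nat.lt_ceil.2 ?_⟩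
  have := abs_sub_abs_le_abs_sub (f y) (f x)
  rw [mem_preimage, Metric.mem_ball, Real.dist_eq] at hy
  exact lt_of_lt_of_le hky (by linarith)

theorem pseudocompact_of_forall_not_locallyFinite
    (h : ∀ O : ℕ → Set Y, (∀ k, IsOpen (O k)) → (∀ k, (O k).Nonempty) → ¬LocallyFinite O) :
    Pseudocompact Y := by
  intro f hf
  by_contra! hunb
  exact h _ (fun k => isOpen_lt continuous_const (continuous_abs.comp hf)) (fun k => hunb k)
    (locallyFinite_lt_abs hf)

end Pseudocompact

section Product

theorem PAccumulates.univ_pi {ι : Type*} {X : ι → Type*} [∀ i, TopologicalSpace (X i)]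
    {p : Ultrafilter ℕ} {A : ∀ i, ℕ → Set (X i)} (hne : ∀ i k, (A i k).Nonempty)
    (hA : ∀ i, PAccumulates p (A i)) : PAccumulates p fun k => univ.pi fun i => A i k := by
  classical
  choose x hx using hA
  refine ⟨x, fun V hV => ?_⟩
  rw [nhds_pi, Filter.mem_pi] at hV
  obtain ⟨I, hI, t, ht, htV⟩ := hV
  filter_upwards [(biInter_mem hI).2 fun i _ => hx i (t i) (ht i)] with k hk
  rw [mem_iInter₂] at hk
  have : (I.pi t ∩ univ.pi fun i => A i k).Nonempty := by
    rw [← univ_pi_ite, ← pi_inter_distrib, univ_pi_nonempty_iff]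
    intro i
    split_ifs with hi
    · exact hk i hi
    · simpa using hne i k
  exact this.mono (inter_subset_inter_left _ htV)

theorem Pseudocompact.exists_freeUF_forall_pAccumulates {X : Type*} [TopologicalSpace X]
    [CompletelyRegularSpace X] (hP : Pseudocompact (ℕ → X)) {U : ℕ → ℕ → Set X}
    (hU : ∀ n k, IsOpen (U n k)) (hne : ∀ n k, (U n k).Nonempty) :
    ∃ p : Ultrafilter ℕ, FreeUF p ∧ ∀ n, PAccumulates p (U n) := by
  let W : ℕ → Set (ℕ → X) := fun k => (Iic k).pi fun n => U n k
  have hW : ¬LocallyFinite W :=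
    hP.not_locallyFinite (fun k => isOpen_set_pi (finite_Iic k) fun n _ => hU n k)
      fun k => ⟨fun n => (hne n k).some, fun n _ => (hne n k).some_mem⟩
  obtain ⟨p, hp, hacc⟩ := exists_freeUF_pAccumulates_of_not_locallyFinite hW
  refine ⟨p, hp, fun n => hacc.of_mapsTo (continuous_apply n) ?_⟩
  have hIci : Ici n ∈ (p : Filter ℕ) := hp.le_cofinite (Nat.cofinite_eq_atTop ▸ Ici_mem_atTop n)
  filter_upwards [hIci] with k hk z hz using hz n hk

theorem IsOpen.exists_univ_pi_subset {ι : Type*} {X : ι → Type*} [∀ i, TopologicalSpace (X i)]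
    {O : Set (∀ i, X i)} (hO : IsOpen O) (hne : O.Nonempty) :
    ∃ A : ∀ i, Set (X i), (∀ i, IsOpen (A i)) ∧ (∀ i, (A i).Nonempty) ∧ univ.pi A ⊆ O := by
  classical
  obtain ⟨y, hy⟩ := hne
  obtain ⟨I, u, hu, huO⟩ := isOpen_pi_iff.1 hO y hy
  refine ⟨fun i => if i ∈ I then u i else univ, fun i => ?_, fun i => ⟨y i, ?_⟩,
    (univ_pi_ite _ u).trans_subset huO⟩ <;> dsimp only <;> split_ifs with hi
  exacts [(hu i hi).1, isOpen_univ, (hu i hi).2, mem_univ _]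

theorem pseudocompact_pi_of_forall_pAccumulates {ι : Type*} {X : ι → Type*}
    [∀ i, TopologicalSpace (X i)]
    (h : ∀ A : ∀ i, ℕ → Set (X i), (∀ i k, IsOpen (A i k)) → (∀ i k, (A i k).Nonempty) →
      ∃ p : Ultrafilter ℕ, FreeUF p ∧ ∀ i, PAccumulates p (A i)) :
    Pseudocompact (∀ i, X i) := by
  refine pseudocompact_of_forall_not_locallyFinite fun O hO hne => ?_
  choose A hA hAne hAO using fun k => (hO k).exists_univ_pi_subset (hne k)
  obtain ⟨p, hp, hacc⟩ := h (fun i k => A k i) (fun i k => hA k i) fun i k => hAne k i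
  exact ((PAccumulates.univ_pi (fun i k => hAne k i) hacc).mono
    (univ_mem' hAO)).not_locallyFinite hp

end Product

theorem exists_strictMono_eventually_mem {Q : ℕ → Set ℕ → Prop}
    (hQ : ∀ n S, S.Infinite → ∃ S' ⊆ S, S'.Infinite ∧ Q n S') :
    ∃ u : ℕ → ℕ, StrictMono u ∧ ∀ n, ∃ S, Q n S ∧ ∀ᶠ j in cofinite, u j ∈ S := by
  choose F hFS hF hQF using hQ
  -- stage `n + 1` shrinks the set of stage `n` by `F n` and picks a larger element in it
  let step (n : ℕ) (s : {S : Set ℕ // S.Infinite} × ℕ) : {S : Set ℕ // S.Infinite} × ℕ :=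
    (⟨F n s.1 s.1.2, hF n _ _⟩, ((hF n s.1 s.1.2).exists_gt s.2).choose)
  let s (n : ℕ) : {S : Set ℕ // S.Infinite} × ℕ := Nat.rec (⟨univ, infinite_univ⟩, 0) step n
  have hs (n : ℕ) : s (n + 1) = step n (s n) := rfl
  have hanti : Antitone fun n => (s n).1.1 :=
    antitone_nat_of_succ_le fun n => (hs n).symm ▸ hFS n _ _
  have hmem (n : ℕ) : (s (n + 1)).2 ∈ (s (n + 1)).1.1 := by
    rw [hs]; exact ((hF n _ _).exists_gt _).choose_spec.1
  refine ⟨fun n => (s n).2, strictMono_nat_of_lt_succ fun n => ?_, fun n => ⟨(s (n + 1)).1, ?_, ?_⟩⟩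
  · rw [hs]; exact ((hF n _ _).exists_gt _).choose_spec.2
  · rw [hs]; exact hQF n _ _
  · rw [Nat.cofinite_eq_atTop, eventually_atTop]
    refine ⟨n + 1, fun j hj => ?_⟩
    obtain ⟨i, rfl⟩ : ∃ i, j = i + 1 := ⟨j - 1, by omega⟩
    exact hanti hj (hmem i)

theorem exists_injective_apply_double {k : ℕ → ℕ} (hk : Injective k) :
    ∃ σ : ℕ → ℕ, Injective σ ∧ ∀ i, σ (k (2 * i)) = 2 * i := by
  have hk2 : Injective fun i => k (2 * i) := hk.comp (mul_right_injective₀ two_ne_zero)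
  refine ⟨extend (fun i => k (2 * i)) (2 * ·) (2 * · + 1), fun a b hab => ?_,
    hk2.extend_apply _ _⟩
  rcases em (∃ i, k (2 * i) = a) with ⟨i, rfl⟩ | ha <;>
    rcases em (∃ j, k (2 * j) = b) with ⟨j, rfl⟩ | hb <;>
    simp only [extend_apply', hk2.extend_apply, not_false_eq_true, *] at hab
  · rw [hab]
  all_goals omega

section Cellular

variable {X : Type*} [TopologicalSpace X]

structure IsCellular {ι : Type*} (W : ι → Set X) : Prop where
  isOpen : ∀ i, IsOpen (W i)
  nonempty : ∀ i, (W i).Nonempty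
  pairwise_disjoint : Pairwise (Disjoint on W)

theorem IsCellular.comp_injective {ι κ : Type*} {W : ι → Set X} (hW : IsCellular W) {f : κ → ι}
    (hf : Injective f) : IsCellular (W ∘ f) :=
  ⟨fun _ => hW.isOpen _, fun _ => hW.nonempty _, hW.pairwise_disjoint.comp_of_injective hf⟩

theorem exists_cellular_subseq {A : ℕ → Set X} {S : Set ℕ} (hA : ∀ k, IsOpen (A k))
    (hne : ∀ k, (A k).Nonempty) (hS : S.Infinite)
    (H : ∀ R ⊆ S, R.Infinite → ∀ x : X, ∃ V ∈ 𝓝 x, ∃ᶠ k in cofinite, k ∈ R ∧ V ∩ A k = ∅) :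
    ∃ k : ℕ → ℕ, Injective k ∧ (∀ i, k i ∈ S) ∧
      ∃ W : ℕ → Set X, IsCellular W ∧ ∀ i, W i ⊆ A (k i) := by
  have step (R : {R : Set ℕ // R ⊆ S ∧ R.Infinite}) : ∃ m ∈ R.1,
      ∃ R' : {R : Set ℕ // R ⊆ S ∧ R.Infinite}, ∃ G : Set X, IsOpen G ∧ G.Nonempty ∧ G ⊆ A m ∧
        R'.1 ⊆ R.1 \ {m} ∧ ∀ k ∈ R'.1, Disjoint G (A k) := by
    obtain ⟨R, hRS, hR⟩ := R
    obtain ⟨m, hm⟩ := hR.nonempty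
    obtain ⟨x, hx⟩ := hne m
    obtain ⟨V, hV, hfreq⟩ := H R hRS hR x
    refine ⟨m, hm, ⟨{k ∈ R | V ∩ A k = ∅}, fun k hk => hRS hk.1,
      frequently_cofinite_iff_infinite.1 hfreq⟩, interior V ∩ A m, isOpen_interior.inter (hA m),
      ⟨x, mem_interior_iff_mem_nhds.2 hV, hx⟩, inter_subset_right, ?_, ?_⟩
    · rintro k ⟨hkR, hk⟩
      exact ⟨hkR, by rintro rfl; exact hk.subset ⟨mem_of_mem_nhds hV, hx⟩⟩
    · rintro k ⟨-, hk⟩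
      rw [Set.disjoint_iff_inter_eq_empty, ← subset_empty_iff, ← hk, inter_assoc]
      exact inter_subset_inter interior_subset inter_subset_right
  choose m hm next G hGo hGne hGA hnext hdisj using step
  let R (i : ℕ) := next^[i] ⟨S, subset_rfl, hS⟩
  have hR (i : ℕ) : R (i + 1) = next (R i) := iterate_succ_apply' _ _ _
  have hanti : Antitone fun i => (R i).1 :=
    antitone_nat_of_succ_le fun i => (hR i).symm ▸ (hnext _).trans sdiff_subset
  have hlater {i j : ℕ} (hij : i < j) : m (R j) ∈ (next (R i)).1 :=
    hR i ▸ hanti (Nat.succ_le_of_lt hij) (hm _)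
  refine ⟨fun i => m (R i), .of_lt_imp_ne fun i j hij => ?_, fun i => (R i).2.1 (hm _),
    fun i => G (R i),
    ⟨fun i => hGo _, fun i => hGne _, (pairwise_disjoint_on _).2 fun i j hij => ?_⟩, fun i => hGA _⟩
  · exact fun h => ((hnext _) (hlater hij)).2 h.symm
  · exact (hdisj _ _ (hlater hij)).mono_right (hGA _)

/-- `W` is indexed by all of `ℕ`, so that `W ∘ u` is again cellular for every injective `u`. -/
def ConvergesOrSeparates (A : ℕ → Set X) (S : Set ℕ) : Prop :=
  (∃ x : X, ∀ V ∈ 𝓝 x, ∀ᶠ k in cofinite, k ∈ S → (V ∩ A k).Nonempty) ∨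
    ∃ W : ℕ → Set X, IsCellular W ∧ ∀ k ∈ S, W k ⊆ A k

theorem exists_infinite_subset_convergesOrSeparates {A : ℕ → Set X} (hA : ∀ k, IsOpen (A k))
    (hne : ∀ k, (A k).Nonempty) {S : Set ℕ} (hS : S.Infinite) :
    ∃ S' ⊆ S, S'.Infinite ∧ ConvergesOrSeparates A S' := by
  by_cases H : ∃ S' ⊆ S, S'.Infinite ∧
      ∃ x : X, ∀ V ∈ 𝓝 x, ∀ᶠ k in cofinite, k ∈ S' → (V ∩ A k).Nonempty
  · obtain ⟨S', hS'S, hS', hconv⟩ := H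
    exact ⟨S', hS'S, hS', .inl hconv⟩
  push Not at H
  obtain ⟨k, hk, hkS, W, hW, hWA⟩ := exists_cellular_subseq hA hne hS H
  -- the odd-numbered sets of `W` serve the indices outside `range (k ∘ (2 * ·))`
  obtain ⟨σ, hσ, hσk⟩ := exists_injective_apply_double hk
  refine ⟨range fun i => k (2 * i), range_subset_iff.2 fun i => hkS _,
    infinite_range_of_injective (hk.comp (mul_right_injective₀ two_ne_zero)),
    .inr ⟨W ∘ σ, hW.comp_injective hσ, ?_⟩⟩
  rintro _ ⟨i, rfl⟩
  simpa only [comp_apply, hσk] using hWA (2 * i)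

theorem ConvergesOrSeparates.comp {A : ℕ → Set X} {S : Set ℕ} (h : ConvergesOrSeparates A S)
    {u : ℕ → ℕ} (hu : Injective u) (huS : ∀ᶠ j in cofinite, u j ∈ S) :
    (∀ p, FreeUF p → PAccumulates p (A ∘ u)) ∨
      ∃ W : ℕ → Set X, IsCellular W ∧
        ∀ p, FreeUF p → PAccumulates p (W ∘ u) → PAccumulates p (A ∘ u) := by
  rcases h with ⟨x, hx⟩ | ⟨W, hW, hWA⟩
  · refine .inl fun p hp => ⟨x, fun V hV => hp.le_cofinite ?_⟩
    filter_upwards [hu.tendsto_cofinite.eventually (hx V hV), huS] with j hj hjS using hj hjS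
  · refine .inr ⟨W, hW, fun p hp hacc => hacc.mono (hp.le_cofinite ?_)⟩
    filter_upwards [huS] with j hj using hWA _ hj

theorem exists_freeUF_forall_pAccumulates_of_cellular
    (h : ∀ U : ℕ → ℕ → Set X, (∀ n, IsCellular (U n)) →
      ∃ p : Ultrafilter ℕ, FreeUF p ∧ ∀ n, PAccumulates p (U n))
    {A : ℕ → ℕ → Set X} (hA : ∀ n k, IsOpen (A n k)) (hne : ∀ n k, (A n k).Nonempty) :
    ∃ p : Ultrafilter ℕ, FreeUF p ∧ ∀ n, PAccumulates p (A n) := by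
  obtain ⟨u, hu, hS⟩ := exists_strictMono_eventually_mem fun n _ hS =>
    exists_infinite_subset_convergesOrSeparates (hA n) (hne n) hS
  have hrow (n : ℕ) := let ⟨_, hQ, huS⟩ := hS n; hQ.comp hu.injective huS
  suffices ∃ p : Ultrafilter ℕ, FreeUF p ∧ ∀ n, PAccumulates p (A n ∘ u) from
    let ⟨p, hp, hacc⟩ := this
    ⟨p.map u, hp.map hu.injective, hacc⟩
  by_cases hD : ∃ D : ℕ → Set X, IsCellular D
  · obtain ⟨D, hD⟩ := hD
    -- rows that converge accept any free ultrafilter, so `D` can stand in for them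
    choose W hW hWA using fun n => (hrow n).elim (fun h => ⟨D, hD, fun p hp _ => h p hp⟩) id
    obtain ⟨p, hp, hacc⟩ := h (fun n => W n ∘ u) fun n => (hW n).comp_injective hu.injective
    exact ⟨p, hp, fun n => hWA n p hp (hacc n)⟩
  · refine ⟨hyperfilter ℕ, freeUF_hyperfilter, fun n => ?_⟩
    exact (hrow n).resolve_right (fun ⟨W, hW, _⟩ => hD ⟨W, hW⟩) _ freeUF_hyperfilter

end Cellular

theorem stmt_11_general {X : Type*} [TopologicalSpace X] [CompletelyRegularSpace X] :
    Pseudocompact (ℕ → X) ↔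
      ∀ U : ℕ → ℕ → Set X,
        (∀ n k, IsOpen (U n k)) → (∀ n k, (U n k).Nonempty) →
        (∀ n k l, k ≠ l → U n k ∩ U n l = ∅) →
        ∃ p : Ultrafilter ℕ, FreeUF p ∧
          ∀ n, ∃ x : X, ∀ V ∈ nhds x, {k | (V ∩ U n k).Nonempty} ∈ p := by
  refine ⟨fun hP U hU hne _ => hP.exists_freeUF_forall_pAccumulates hU hne, fun h => ?_⟩
  refine pseudocompact_pi_of_forall_pAccumulates fun A hA hne =>
    exists_freeUF_forall_pAccumulates_of_cellular (fun U hU => ?_) hA hne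
  exact h U (fun n => (hU n).isOpen) (fun n => (hU n).nonempty) fun n k l hkl =>
    Set.disjoint_iff_inter_eq_empty.1 ((hU n).pairwise_disjoint hkl)

/-- `X^ω` is pseudocompact iff every countable family of disjoint sequences of
nonempty open subsets of `X` admits a common free ultrafilter of accumulation. -/
theorem stmt_11 {X : Type*} [TopologicalSpace X] [T2Space X] [CompletelyRegularSpace X] :
    Pseudocompact (ℕ → X) ↔
      ∀ U : ℕ → ℕ → Set X,
        (∀ n k, IsOpen (U n k)) → (∀ n k, (U n k).Nonempty) →
        (∀ n k l, k ≠ l → U n k ∩ U n l = ∅) →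
        ∃ p : Ultrafilter ℕ, FreeUF p ∧
          ∀ n, ∃ x : X, ∀ V ∈ nhds x, {k | (V ∩ U n k).Nonempty} ∈ p :=
  stmt_11_general
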